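/- arXiv:1312.2494 — 16 statements merged into one kernel-verified Lean document; each statement's English description precedes it below -/
import Mathlib

section
/- Let A be a set equipped with a binary operation → and a distinguished element 1. If A satisfies (Re), (M) and (Ex), then the three properties (B), (BB) and (*) are pairwise equivalent. -/
theorem stmt_0 {A : Type*} (op : A → A → A) (e : A)
    (hRe : (∀ x : A, op x x = e))
    (hM : (∀ x : A, op e x = x))
    (hEx : (∀ x y z : A, op x (op y z) = op y (op x z)))
    : ((∀ x y z : A, op (op y z) (op (op x y) (op x z)) = e) ↔ (∀ x y z : A, op (op y z) (op (op z x) (op y x)) = e)) ∧ ((∀ x y z : A, op (op y z) (op (op z x) (op y x)) = e) ↔ (∀ x y z : A, op y z = e → op (op x y) (op x z) = e)) := by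
  have hB_iff_BB : (∀ x y z : A, op (op y z) (op (op x y) (op x z)) = e) ↔
      (∀ x y z : A, op (op y z) (op (op z x) (op y x)) = e) := by
    constructor
    · intro hB x y z
      rw [hEx]; exact hB y z x
    · intro hBB x y z
      rw [hEx]; exact hBB z x y
  have hB_to_star : (∀ x y z : A, op (op y z) (op (op x y) (op x z)) = e) →
      (∀ x y z : A, op y z = e → op (op x y) (op x z) = e) := by
    intro hB x y z h
    have := hB x y z
    rwa [h, hM] at this
  have hstar_to_B : (∀ x y z : A, op y z = e → op (op x y) (op x z) = e) →
      (∀ x y z : A, op (op y z) (op (op x y) (op x z)) = e) := by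
    intro hs x y z
    have h1 : op y (op (op y z) z) = e := by rw [hEx, hRe]
    have h2 : op (op y z) (op (op x y) (op x z)) = op (op x y) (op x (op (op y z) z)) := by
      rw [hEx (op y z), hEx (op y z)]
    rw [h2]
    exact hs x y (op (op y z) z) h1
  refine ⟨hB_iff_BB, ?_, fun hs => hB_iff_BB.mp (hstar_to_B hs)⟩
  intro hBB
  exact hB_to_star (hB_iff_BB.mpr hBB)
end

section
/- Let A be a set equipped with a binary operation → and a distinguished element 1. If A satisfies (Re), (M) and (Ex), then property (**) holds if and only if property (Tr) holds. -/
theorem stmt_1 {A : Type*} (op : A → A → A) (e : A)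
    (hRe : (∀ x : A, op x x = e))
    (hM : (∀ x : A, op e x = x))
    (hEx : (∀ x y z : A, op x (op y z) = op y (op x z)))
    : (∀ x y z : A, op y z = e → op (op z x) (op y x) = e) ↔ (∀ x y z : A, op x y = e → op y z = e → op x z = e) := by
  constructor
  · intro h x y z hxy hyz
    have := h z x y hxy
    rw [hyz, hM] at this
    exact this
  · intro h x y z hyz
    have h1 : op z (op (op z x) x) = e := by rw [hEx, hRe]
    have h2 : op y (op (op z x) x) = e := h y z _ hyz h1
    rw [← hEx] at h2
    exact h2
end

section
/- Let A be a set equipped with a binary operation → and a distinguished element 1. If A satisfies (Re), (M), (B) and (An), then property (Ex) holds if and only if property (BB) holds. -/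
theorem stmt_2 {A : Type*} (op : A → A → A) (e : A)
    (hRe : (∀ x : A, op x x = e))
    (hM : (∀ x : A, op e x = x))
    (hB : (∀ x y z : A, op (op y z) (op (op x y) (op x z)) = e))
    (hAn : (∀ x y : A, op x y = e → op y x = e → x = y))
    : (∀ x y z : A, op x (op y z) = op y (op x z)) ↔ (∀ x y z : A, op (op y z) (op (op z x) (op y x)) = e) := by
  constructor
  · intro hEx x y z
    rw [hEx (op y z) (op z x) (op y x)]
    exact hB y z x
  · intro hBB
    have L1 : ∀ a c, op a (op (op a c) c) = e := fun a c => by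
      simpa [hM] using hBB c e a
    have trans : ∀ a b c, op a b = e → op b c = e → op a c = e := fun a b c h1 h2 => by
      have h := hB a b c
      rw [h1, h2, hM, hM] at h
      exact h
    have mono : ∀ a b c, op a b = e → op (op b c) (op a c) = e := fun a b c h => by
      have h' := hBB c a b
      rw [h, hM] at h'
      exact h'
    have key : ∀ x y z, op (op x (op y z)) (op y (op x z)) = e := fun x y z =>
      trans _ _ _ (hBB z x (op y z)) (mono y (op (op y z) z) (op x z) (L1 y z))
    intro x y z
    exact hAn _ _ (key x y z) (key y x z)
end

section
/- Let A be a set equipped with a binary operation → and a distinguished element 1. If A satisfies (M) and (BB), then A satisfies (B). -/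
theorem stmt_3 {A : Type*} (op : A → A → A) (e : A)
    (hM : (∀ x : A, op e x = x))
    (hBB : (∀ x y z : A, op (op y z) (op (op z x) (op y x)) = e))
    : (∀ x y z : A, op (op y z) (op (op x y) (op x z)) = e) := by
  have R : ∀ a b, op a b = e → ∀ c, op (op b c) (op a c) = e := by
    intro a b h c
    have := hBB c a b
    rw [h, hM] at this
    exact this
  have I : ∀ a b, op a (op (op a b) b) = e := by
    intro a b
    have := hBB b e a
    simp only [hM] at this
    exact this
  intro x y z
  have h1 : op (op x y) (op (op y z) (op x z)) = e := hBB z x y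
  have S := R (op x y) (op (op y z) (op x z)) h1 (op x z)
  have h2 := R (op y z) _ (I (op y z) (op x z)) (op (op x y) (op x z))
  rw [S, hM] at h2
  exact h2
end

section
/- Let A be a set equipped with a binary operation → and a distinguished element 1. If A satisfies (M) and (B), then A satisfies (**). -/
theorem stmt_4 {A : Type*} (op : A → A → A) (e : A)
    (hM : (∀ x : A, op e x = x))
    (hB : (∀ x y z : A, op (op y z) (op (op x y) (op x z)) = e))
    : (∀ x y z : A, op y z = e → op (op z x) (op y x) = e) := by
  intro x y z h
  have := hB y z x
  rwa [h, hM] at this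
end

section
/- Let A be a set equipped with a binary operation → and a distinguished element 1. Then A satisfies (BB), (D), (Re), (N) and (An) if and only if A satisfies (B), (C), (Re) and (An). (That is, an algebra is a BCI algebra if and only if properties (B), (C), (Re), (An) are satisfied.) -/
theorem stmt_5 {A : Type*} (op : A → A → A) (e : A)
    : ((∀ x y z : A, op (op y z) (op (op z x) (op y x)) = e) ∧ (∀ x y : A, op y (op (op y x) x) = e) ∧ (∀ x : A, op x x = e) ∧ (∀ x : A, op e x = e → x = e) ∧ (∀ x y : A, op x y = e → op y x = e → x = y)) ↔ ((∀ x y z : A, op (op y z) (op (op x y) (op x z)) = e) ∧ (∀ x y z : A, op (op x (op y z)) (op y (op x z)) = e) ∧ (∀ x : A, op x x = e) ∧ (∀ x y : A, op x y = e → op y x = e → x = y)) := by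
  constructor
  · rintro ⟨BB, D, Re, N, An⟩
    have tr : ∀ a b c : A, op a b = e → op b c = e → op a c = e := by
      intro a b c h1 h2
      have h := BB c a b
      rw [h1] at h
      have h := N _ h
      rw [h2] at h
      exact N _ h
    have he : ∀ x : A, op e x = x := by
      intro x
      have h1 : op (op e x) x = e := N _ (D x e)
      have h2 : op x (op e x) = e := by
        have h := D x x
        rw [Re] at h
        exact h
      exact An _ _ h1 h2
    have L2 : ∀ a b c : A, op a b = e → op (op b c) (op a c) = e := by
      intro a b c h
      have hb := BB c a b
      rw [h] at hb
      exact N _ hb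
    have hC : ∀ x y z : A, op (op x (op y z)) (op y (op x z)) = e := by
      intro x y z
      have h1 := BB z x (op y z)
      have h3 := L2 y (op (op y z) z) (op x z) (D z y)
      exact tr _ _ _ h1 h3
    have hB : ∀ x y z : A, op (op y z) (op (op x y) (op x z)) = e := by
      intro x y z
      have hb := BB z x y
      have hc := hC (op x y) (op y z) (op x z)
      rw [hb] at hc
      exact N _ hc
    exact ⟨hB, hC, Re, An⟩
  · rintro ⟨B, C, Re, An⟩
    have D : ∀ x y : A, op y (op (op y x) x) = e := by
      intro x y
      have h1 := C y (op y x) x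
      rw [Re] at h1
      have h2 := C (op y x) y x
      rw [Re] at h2
      exact An _ _ h1 h2
    have N : ∀ x : A, op e x = e → x = e := by
      intro x h
      have h2 := D x x
      rw [Re, h] at h2
      exact An _ _ h2 h
    refine ⟨?_, D, Re, N, An⟩
    intro x y z
    have hb := B y z x
    have hc := C (op z x) (op y z) (op y x)
    rw [hb] at hc
    exact N _ hc
end

section
/- Let A be a set equipped with a binary operation → and a distinguished element 1. Then A satisfies (BB), (D), (Re), (L) and (An) if and only if A satisfies (B), (C), (K) and (An). (That is, an algebra is a BCK algebra if and only if properties (B), (C), (K), (An) are satisfied.) -/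
theorem stmt_6 {A : Type*} (op : A → A → A) (e : A)
    : ((∀ x y z : A, op (op y z) (op (op z x) (op y x)) = e) ∧ (∀ x y : A, op y (op (op y x) x) = e) ∧ (∀ x : A, op x x = e) ∧ (∀ x : A, op x e = e) ∧ (∀ x y : A, op x y = e → op y x = e → x = y)) ↔ ((∀ x y z : A, op (op y z) (op (op x y) (op x z)) = e) ∧ (∀ x y z : A, op (op x (op y z)) (op y (op x z)) = e) ∧ (∀ x y : A, op x (op y x) = e) ∧ (∀ x y : A, op x y = e → op y x = e → x = y)) := by
  constructor
  · rintro ⟨hBB, hD, hRe, hL, hAn⟩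
    -- mp_e : op e u = e → u = e
    have mp_e : ∀ u : A, op e u = e → u = e := fun u h => hAn u e (hL u) h
    -- T : op y z = e → op (op z x) (op y x) = e
    have T : ∀ x y z : A, op y z = e → op (op z x) (op y x) = e := by
      intro x y z h
      have := hBB x y z
      rw [h] at this
      exact mp_e _ this
    -- trans : op x y = e → op y z = e → op x z = e
    have trans : ∀ x y z : A, op x y = e → op y z = e → op x z = e := by
      intro x y z hxy hyz
      have := T z x y hxy
      rw [hyz] at this
      exact mp_e _ this
    -- C
    have hC : ∀ x y z : A, op (op x (op y z)) (op y (op x z)) = e := by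
      intro x y z
      -- BB with (y:=x, z:=(op y z), x:=z) : op (op x (op y z)) (op (op (op y z) z) (op x z)) = e
      have h1 := hBB z x (op y z)
      -- D : op y (op (op y z) z) = e ; T gives :
      have h2 := T (op x z) y (op (op y z) z) (hD z y)
      exact trans _ _ _ h1 h2
    -- K
    have hK : ∀ x y : A, op x (op y x) = e := by
      intro x y
      -- x ≤ op e x
      have h1 : op x (op e x) = e := by
        have := hC e x x
        rw [hRe x, hRe e] at this
        exact mp_e _ this
      -- op e x ≤ op y x  (from y ≤ e)
      have h2 : op (op e x) (op y x) = e := T x y e (hL y)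
      exact trans _ _ _ h1 h2
    -- B
    have hB : ∀ x y z : A, op (op y z) (op (op x y) (op x z)) = e := by
      intro x y z
      have h1 := hBB z x y   -- op (op x y) (op (op y z) (op x z)) = e
      have h2 := hC (op x y) (op y z) (op x z)
      rw [h1] at h2
      exact mp_e _ h2
    exact ⟨hB, hC, hK, hAn⟩
  · rintro ⟨hB, hC, hK, hAn⟩
    -- L : op x e = e
    -- first: ∀ w a c, op (op w (op c c)) e ... need e = op m m for some m
    have star : ∀ w a c : A, op (op w (op a c)) e = e ∨ True := fun _ _ _ => Or.inr trivial
    clear star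
    -- key: ∀ w a, op (op w (op a a)) (op a (op w a)) = e, and op a (op w a) = e by K
    have keyfam : ∀ w a : A, op (op w (op a a)) e = e := by
      intro w a
      have h := hC w a a
      rw [hK a w] at h
      exact h
    -- Re for elements of the form op a (op a b)
    have reSpec : ∀ a b : A, op (op a (op a b)) (op a (op a b)) = e := by
      intro a b
      have h := hC a a b
      exact h
    -- L
    have hL : ∀ x : A, op x e = e := by
      intro x
      -- e = op m m with m := op a (op a b); pick a := e, b := e
      have hm := reSpec e e
      -- (op x e) → e = e : from keyfam with a := m
      have h1 : op (op x e) e = e := by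
        have := keyfam x (op e (op e e))
        rw [hm] at this
        exact this
      have h2 : op e (op x e) = e := hK e x
      exact hAn _ _ h1 h2
    have mp_e : ∀ u : A, op e u = e → u = e := fun u h => hAn u e (hL u) h
    -- Re
    have hRe : ∀ x : A, op x x = e := by
      intro x
      have h := hC x e x
      rw [hK x e] at h
      exact mp_e _ (mp_e _ h)
    -- D
    have hD : ∀ x y : A, op y (op (op y x) x) = e := by
      intro x y
      have h := hC (op y x) y x
      rw [hRe (op y x)] at h
      exact mp_e _ h
    -- BB
    have hBB : ∀ x y z : A, op (op y z) (op (op z x) (op y x)) = e := by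
      intro x y z
      have h1 := hB y z x   -- op (op z x) (op (op y z) (op y x)) = e
      have h2 := hC (op z x) (op y z) (op y x)
      rw [h1] at h2
      exact mp_e _ h2
    exact ⟨hBB, hD, hRe, hL, hAn⟩
end

section
/- Let A be a set equipped with a binary operation → and a distinguished element 1. Then A satisfies (Re), (Ex), (An) and (B) if and only if A satisfies (BB), (D), (Re), (N) and (An). (That is, a BCH algebra satisfying (B) is exactly a BCI algebra.) -/
theorem stmt_7 {A : Type*} (op : A → A → A) (e : A)
    : ((∀ x : A, op x x = e) ∧ (∀ x y z : A, op x (op y z) = op y (op x z)) ∧ (∀ x y : A, op x y = e → op y x = e → x = y) ∧ (∀ x y z : A, op (op y z) (op (op x y) (op x z)) = e)) ↔ ((∀ x y z : A, op (op y z) (op (op z x) (op y x)) = e) ∧ (∀ x y : A, op y (op (op y x) x) = e) ∧ (∀ x : A, op x x = e) ∧ (∀ x : A, op e x = e → x = e) ∧ (∀ x y : A, op x y = e → op y x = e → x = y)) := by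
  constructor
  · rintro ⟨hRe, hEx, hAn, hB⟩
    refine ⟨?_, ?_, hRe, ?_, hAn⟩
    · intro x y z
      have h := hB y z x
      rwa [hEx (op z x) (op y z) (op y x)] at h
    · intro x y
      rw [hEx y (op y x) x, hRe]
    · intro x hx
      have h1 : op x (op e x) = e := by
        rw [hEx x e x, hRe, hRe]
      rw [hx] at h1
      exact hAn x e h1 hx
  · rintro ⟨hBB, hD, hRe, hN, hAn⟩
    -- antitone: op a b = e → op (op b c) (op a c) = e
    have L1 : ∀ a b c : A, op a b = e → op (op b c) (op a c) = e := by
      intro a b c h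
      have := hBB c a b
      rw [h] at this
      exact hN _ this
    -- transitivity
    have L2 : ∀ a b c : A, op a b = e → op b c = e → op a c = e := by
      intro a b c h1 h2
      have h3 := L1 a b c h1
      rw [h2] at h3
      exact hN _ h3
    -- op e x = x
    have L5 : ∀ x : A, op e x = x := by
      intro x
      have L3 : op (op e x) x = e := hN _ (hD x e)
      have L4 : op x (op e x) = e := by
        have := hD x x
        rwa [hRe x] at this
      exact hAn (op e x) x L3 L4
    -- Lemma E: op z (op y x) = e → op y (op z x) = e
    have L6 : ∀ x y z : A, op z (op y x) = e → op y (op z x) = e := by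
      intro x y z h
      have h1 : op (op (op y x) x) (op z x) = e := L1 z (op y x) x h
      exact L2 y (op (op y x) x) (op z x) (hD x y) h1
    -- Lemma F: op (op y x) (op (op z y) (op z x)) = e
    have L7 : ∀ x y z : A, op (op y x) (op (op z y) (op z x)) = e := by
      intro x y z
      exact L6 (op z x) (op y x) (op z y) (hBB x z y)
    -- L8: op z (op (op y (op z x)) (op y x)) = e
    have L8 : ∀ x y z : A, op z (op (op y (op z x)) (op y x)) = e := by
      intro x y z
      have h1 := L7 x (op z x) y
      exact L2 z (op (op z x) x) (op (op y (op z x)) (op y x)) (hD x z) h1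
    -- half exchange
    have L9 : ∀ x y z : A, op (op y (op z x)) (op z (op y x)) = e := by
      intro x y z
      exact L6 (op y x) (op y (op z x)) z (L8 x y z)
    -- exchange
    have hEx : ∀ x y z : A, op x (op y z) = op y (op x z) := by
      intro x y z
      exact hAn _ _ (L9 z x y) (L9 z y x)
    refine ⟨hRe, hEx, hAn, ?_⟩
    intro x y z
    exact L7 z y x
end

section
/- Let A be a set equipped with a binary operation → and a distinguished element 1. If A satisfies (BB), (D) and (N), then A satisfies (C). -/
theorem stmt_8 {A : Type*} (op : A → A → A) (e : A)
    (hBB : (∀ x y z : A, op (op y z) (op (op z x) (op y x)) = e))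
    (hD : (∀ x y : A, op y (op (op y x) x) = e))
    (hN : (∀ x : A, op e x = e → x = e))
    : (∀ x y z : A, op (op x (op y z)) (op y (op x z)) = e) := by
  -- transitivity of a ≤ b := op a b = e
  have htrans : ∀ a b c : A, op a b = e → op b c = e → op a c = e := by
    intro a b c hab hbc
    have h1 := hBB c a b
    rw [hab] at h1
    have h2 := hN _ h1
    rw [hbc] at h2
    exact hN _ h2
  intro x y z
  have step1 : op (op x (op y z)) (op (op (op y z) z) (op x z)) = e :=
    hBB z x (op y z)
  have step2 : op (op (op (op y z) z) (op x z)) (op y (op x z)) = e := by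
    have h1 := hBB (op x z) y (op (op y z) z)
    rw [hD z y] at h1
    exact hN _ h1
  exact htrans _ _ _ step1 step2
end

section
/- Let A be a set equipped with a binary operation → and a distinguished element 1. If A satisfies (BB), (D), (N) and (An), then A satisfies (Ex). -/
theorem stmt_9 {A : Type*} (op : A → A → A) (e : A)
    (hBB : (∀ x y z : A, op (op y z) (op (op z x) (op y x)) = e))
    (hD : (∀ x y : A, op y (op (op y x) x) = e))
    (hN : (∀ x : A, op e x = e → x = e))
    (hAn : (∀ x y : A, op x y = e → op y x = e → x = y))
    : (∀ x y z : A, op x (op y z) = op y (op x z)) := by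
  have trans : ∀ a b c : A, op a b = e → op b c = e → op a c = e := by
    intro a b c h1 h2
    have h := hBB c a b
    rw [h1, h2] at h
    exact hN _ (hN _ h)
  have h14 : ∀ a b w : A, op (op (op (op a b) b) w) (op a w) = e := by
    intro a b w
    have h := hBB w a (op (op a b) b)
    rw [hD b a] at h
    exact hN _ h
  have key : ∀ x y z : A, op (op x (op y z)) (op y (op x z)) = e := by
    intro x y z
    exact trans _ _ _ (hBB z x (op y z)) (h14 y z (op x z))
  intro x y z
  exact hAn _ _ (key x y z) (key y x z)
end

section
/- Let A be a set equipped with a binary operation → and a distinguished element 1. If A satisfies (BB), (D), (Re) and (An), then A satisfies (N). -/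
theorem stmt_11 {A : Type*} (op : A → A → A) (e : A)
    (hBB : (∀ x y z : A, op (op y z) (op (op z x) (op y x)) = e))
    (hD : (∀ x y : A, op y (op (op y x) x) = e))
    (hRe : (∀ x : A, op x x = e))
    (hAn : (∀ x y : A, op x y = e → op y x = e → x = y))
    : (∀ x : A, op e x = e → x = e) := by
  intro x hx
  have h := hD x x
  rw [hRe, hx] at h
  exact hAn x e h hx
end

section
/- Let A be a set equipped with a binary operation → and a distinguished element 1. If A satisfies (Re), (Ex) and (Tr), then A satisfies (**). -/
theorem stmt_12 {A : Type*} (op : A → A → A) (e : A)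
    (hRe : (∀ x : A, op x x = e))
    (hEx : (∀ x y z : A, op x (op y z) = op y (op x z)))
    (hTr : (∀ x y z : A, op x y = e → op y z = e → op x z = e))
    : (∀ x y z : A, op y z = e → op (op z x) (op y x) = e) := by
  intro x y z h
  have key : op z (op (op z x) x) = e := by rw [hEx]; exact hRe _
  have : op y (op (op z x) x) = e := hTr _ _ _ h key
  rw [hEx] at this
  exact this
end

section
/- Let A be a set equipped with a binary operation → and a distinguished element 1. If A satisfies (Re), (Ex) and (*), then A satisfies (BB). -/
theorem stmt_13 {A : Type*} (op : A → A → A) (e : A)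
    (hRe : (∀ x : A, op x x = e))
    (hEx : (∀ x y z : A, op x (op y z) = op y (op x z)))
    (hstar : (∀ x y z : A, op y z = e → op (op x y) (op x z) = e))
    : (∀ x y z : A, op (op y z) (op (op z x) (op y x)) = e) := by
  intro x y z
  have h1 : op z (op (op z x) x) = e := by rw [hEx]; exact hRe _
  have h2 := hstar y z (op (op z x) x) h1
  rwa [hEx y (op z x) x] at h2
end

section
/- Let A be a set equipped with a binary operation → and a distinguished element 1. If A satisfies (Re), (Ex) and (An), then A satisfies (M). Consequently, A satisfies (Re), (Ex), (An) if and only if A satisfies (Re), (M), (Ex), (An). -/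
theorem stmt_14 {A : Type*} (op : A → A → A) (e : A)
    : (((∀ x : A, op x x = e) ∧ (∀ x y z : A, op x (op y z) = op y (op x z)) ∧ (∀ x y : A, op x y = e → op y x = e → x = y)) → (∀ x : A, op e x = x)) ∧ (((∀ x : A, op x x = e) ∧ (∀ x y z : A, op x (op y z) = op y (op x z)) ∧ (∀ x y : A, op x y = e → op y x = e → x = y)) ↔ ((∀ x : A, op x x = e) ∧ (∀ x : A, op e x = x) ∧ (∀ x y z : A, op x (op y z) = op y (op x z)) ∧ (∀ x y : A, op x y = e → op y x = e → x = y))) := by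
  have main : ((∀ x : A, op x x = e) ∧ (∀ x y z : A, op x (op y z) = op y (op x z)) ∧
      (∀ x y : A, op x y = e → op y x = e → x = y)) → (∀ x : A, op e x = x) := by
    rintro ⟨re, ex, an⟩ x
    have star : ∀ y : A, op y (op e y) = e := by
      intro y
      have h := ex e y y
      rw [re y, re e] at h
      exact h.symm
    have h1 : op e (op (op e x) x) = e := by
      have h := ex (op e x) e x
      rw [← h, re (op e x)]
    have h2 : op (op (op e x) x) e = e := by
      have h := star (op (op e x) x)
      rwa [h1] at h
    have h3 : op (op e x) x = e := an _ _ h2 h1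
    exact an (op e x) x h3 (star x)
  refine ⟨main, ?_⟩
  constructor
  · rintro ⟨re, ex, an⟩
    exact ⟨re, main ⟨re, ex, an⟩, ex, an⟩
  · rintro ⟨re, _, ex, an⟩
    exact ⟨re, ex, an⟩
end

section
/- Let A be a set equipped with a binary operation → and a distinguished element 1. Then: (a) if A satisfies (Re), (L), (Ex) and (**), then A satisfies (p-2); (b) if A satisfies (Ex), (B), (*) and (pi), then A satisfies (p-1); and consequently (d) if A satisfies (Re), (Ex), (B), (**), (*), (L), (An) and (pi), then A satisfies (pimpl). -/
lemma aux_p2 {A : Type*} (op : A → A → A) (e : A)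
    (hRe : ∀ x : A, op x x = e) (hL : ∀ x : A, op x e = e)
    (hEx : ∀ x y z : A, op x (op y z) = op y (op x z))
    (hSS : ∀ x y z : A, op y z = e → op (op z x) (op y x) = e) :
    ∀ x y z : A, op (op (op x y) (op x z)) (op x (op y z)) = e := by
  intro x y z
  have h1 : op y (op x y) = e := by rw [hEx, hRe, hL]
  have := hSS (op x z) y (op x y) h1
  rw [hEx x y z]
  exact this

lemma aux_p1 {A : Type*} (op : A → A → A) (e : A)
    (hEx : ∀ x y z : A, op x (op y z) = op y (op x z))
    (hB : ∀ x y z : A, op (op y z) (op (op x y) (op x z)) = e)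
    (hS : ∀ x y z : A, op y z = e → op (op x y) (op x z) = e)
    (hPi : ∀ x y : A, op y (op y x) = op y x) :
    ∀ x y z : A, op (op x (op y z)) (op (op x y) (op x z)) = e := by
  intro x y z
  have := hS x (op y z) (op (op x y) (op x z)) (hB x y z)
  rwa [hEx x (op x y) (op x z), hPi] at this

theorem stmt_18 {A : Type*} (op : A → A → A) (e : A)
    : (((∀ x : A, op x x = e) ∧ (∀ x : A, op x e = e) ∧ (∀ x y z : A, op x (op y z) = op y (op x z)) ∧ (∀ x y z : A, op y z = e → op (op z x) (op y x) = e)) → (∀ x y z : A, op (op (op x y) (op x z)) (op x (op y z)) = e)) ∧ (((∀ x y z : A, op x (op y z) = op y (op x z)) ∧ (∀ x y z : A, op (op y z) (op (op x y) (op x z)) = e) ∧ (∀ x y z : A, op y z = e → op (op x y) (op x z) = e) ∧ (∀ x y : A, op y (op y x) = op y x)) → (∀ x y z : A, op (op x (op y z)) (op (op x y) (op x z)) = e)) ∧ (((∀ x : A, op x x = e) ∧ (∀ x y z : A, op x (op y z) = op y (op x z)) ∧ (∀ x y z : A, op (op y z) (op (op x y) (op x z)) = e) ∧ (∀ x y z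 : A, op y z = e → op (op z x) (op y x) = e) ∧ (∀ x y z : A, op y z = e → op (op x y) (op x z) = e) ∧ (∀ x : A, op x e = e) ∧ (∀ x y : A, op x y = e → op y x = e → x = y) ∧ (∀ x y : A, op y (op y x) = op y x)) → (∀ x y z : A, op x (op y z) = op (op x y) (op x z))) := by
  refine ⟨?_, ?_, ?_⟩
  · rintro ⟨hRe, hL, hEx, hSS⟩
    exact aux_p2 op e hRe hL hEx hSS
  · rintro ⟨hEx, hB, hS, hPi⟩
    exact aux_p1 op e hEx hB hS hPi
  · rintro ⟨hRe, hEx, hB, hSS, hS, hL, hAn, hPi⟩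
    intro x y z
    exact hAn _ _ (aux_p1 op e hEx hB hS hPi x y z) (aux_p2 op e hRe hL hEx hSS x y z)
end

section
/- Let A be a set equipped with a binary operation → and a distinguished element 1. If A satisfies (M) and (BB), then A satisfies (C); moreover, if A additionally satisfies (An), then A satisfies (Ex). -/
theorem stmt_19 {A : Type*} (op : A → A → A) (e : A)
    (hM : (∀ x : A, op e x = x))
    (hBB : (∀ x y z : A, op (op y z) (op (op z x) (op y x)) = e))
    : (∀ x y z : A, op (op x (op y z)) (op y (op x z)) = e) ∧ ((∀ x y : A, op x y = e → op y x = e → x = y) → (∀ x y z : A, op x (op y z) = op y (op x z))) := by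
  have trans : ∀ a b c : A, op a b = e → op b c = e → op a c = e := by
    intro a b c h1 h2
    have h := hBB c a b
    rw [h1, hM, h2, hM] at h
    exact h
  have L1 : ∀ x y : A, op x (op (op x y) y) = e := by
    intro x y
    have h := hBB y e x
    rw [hM, hM] at h
    exact h
  have su : ∀ p q r : A, op p q = e → op (op q r) (op p r) = e := by
    intro p q r h
    have h2 := hBB r p q
    rw [h, hM] at h2
    exact h2
  have L3 : ∀ y z x : A, op (op (op (op y z) z) x) (op y x) = e := by
    intro y z x
    exact su y (op (op y z) z) x (L1 y z)
  have hC : ∀ x y z : A, op (op x (op y z)) (op y (op x z)) = e := by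
    intro x y z
    exact trans _ _ _ (hBB z x (op y z)) (L3 y z (op x z))
  refine ⟨hC, fun hAn x y z => hAn _ _ (hC x y z) (hC y x z)⟩
end
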